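/- arXiv:0812.0215 — 2 statements merged into one kernel-verified Lean document; each statement's English description precedes it below -/
import Mathlib

section
/- Let (1,h1,h2,h3) ∈ ℤ^4 satisfy 0 ≤ h1, 0 ≤ h2 ≤ C(h1+1,2), and −(1/3)·h2 ≤ h3 ≤ h2^⟨2⟩. If moreover h2 + 3 ≤ C((h1−3)+1, 2), then the vector (1, h1−3, h2+3, h3−1) also satisfies these three conditions, i.e. 0 ≤ h1−3, 0 ≤ h2+3 ≤ C((h1−3)+1,2), and −(1/3)·(h2+3) ≤ h3−1 ≤ (h2+3)^⟨2⟩. -/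
open Finset

noncomputable section

/-- `Δ` is a simplicial complex on `[n] = {1,…,n}`: a collection of subsets of `[n]`,
closed under taking subsets, containing every singleton `{i}` for `i ∈ [n]`. -/
def IsComplexOn (n : ℕ) (Δ : Finset (Finset ℕ)) : Prop :=
  (∀ F ∈ Δ, ∀ G ⊆ F, G ∈ Δ) ∧
  (∀ F ∈ Δ, ∀ i ∈ F, i ∈ Finset.Icc 1 n) ∧
  (∀ i ∈ Finset.Icc 1 n, ({i} : Finset ℕ) ∈ Δ)

/-- a simplicial complex whose vertex set is contained in `[n]`:
a downward closed collection of subsets of `[n]`. -/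
def IsComplexIn (n : ℕ) (Δ : Finset (Finset ℕ)) : Prop :=
  (∀ F ∈ Δ, ∀ G ⊆ F, G ∈ Δ) ∧ (∀ F ∈ Δ, ∀ i ∈ F, i ∈ Finset.Icc 1 n)

/-- the faces of `Δ` with `m` vertices -/
def facesOf (Δ : Finset (Finset ℕ)) (m : ℕ) : Finset (Finset ℕ) :=
  Δ.filter fun F => F.card = m

/-- `fVec Δ j = f_{j-1}(Δ)`, the number of faces of `Δ` with `j` vertices;
by convention `f_{-1}(Δ) = 1`. -/
def fVec (Δ : Finset (Finset ℕ)) (j : ℕ) : ℤ :=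
  if j = 0 then 1 else ((facesOf Δ j).card : ℤ)

/-- the `h`-vector of a `(d-1)`-dimensional complex, defined by
`∑ f_{i-1} (x-1)^{d-i} = ∑ h_i x^{d-i}`, i.e.
`h_i = ∑_{j=0}^{i} (-1)^{i-j} C(d-j, i-j) f_{j-1}`. -/
def hVec (d : ℕ) (Δ : Finset (Finset ℕ)) (i : ℕ) : ℤ :=
  ∑ j ∈ Finset.range (i + 1),
    (-1 : ℤ) ^ (i - j) * ((d - j).choose (i - j) : ℤ) * fVec Δ j

/-- the dimension `max {k : f_k(Δ) ≠ 0}` of `Δ`, as an integer -/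
def dimZ (Δ : Finset (Finset ℕ)) : ℤ := ((Δ.sup Finset.card : ℕ) : ℤ) - 1

/-- the link `lk_Δ(F) = {G : G ∩ F = ∅, G ∪ F ∈ Δ}` -/
def link (Δ : Finset (Finset ℕ)) (F : Finset ℕ) : Finset (Finset ℕ) :=
  Δ.filter fun G => Disjoint G F ∧ G ∪ F ∈ Δ

variable (K : Type) [Field K]

/-- the simplicial boundary operator on formal `K`-linear combinations of
finite subsets of `ℕ` (vertices ordered by the order on `ℕ`):
`∂ F = ∑_{v ∈ F} (-1)^{#{u ∈ F : u < v}} (F \ {v})`. -/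
def bdry : (Finset ℕ →₀ K) →ₗ[K] (Finset ℕ →₀ K) :=
  Finsupp.lsum K fun F => LinearMap.toSpanSingleton K (Finset ℕ →₀ K)
    (∑ v ∈ F, ((-1 : K) ^ ((F.filter fun u => u < v).card)) • Finsupp.single (F.erase v) (1 : K))

/-- the space of simplicial `K`-chains of `Δ` spanned by the faces with `m` vertices
(for `m = 0` this is the span of the empty face, giving *reduced* homology) -/
def chains (Δ : Finset (Finset ℕ)) (m : ℕ) : Submodule K (Finset ℕ →₀ K) :=
  Submodule.span K ((fun F => Finsupp.single F (1 : K)) '' (facesOf Δ m : Set (Finset ℕ)))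

/-- the dimension of the reduced homology of `Δ` at faces of cardinality `m`:
`dim (ker ∂ ∩ C_m) - dim (∂ C_{m+1})` -/
def homDim (Δ : Finset (Finset ℕ)) (m : ℕ) : ℕ :=
  Module.finrank K ↥(chains K Δ m ⊓ LinearMap.ker (bdry K))
    - Module.finrank K ↥((chains K Δ (m + 1)).map (bdry K))

/-- the reduced Betti number `β_i(Δ; K) = dim_K H̃_i(Δ; K)` for `i : ℤ` -/
def betti (Δ : Finset (Finset ℕ)) (i : ℤ) : ℕ :=
  if 0 ≤ i + 1 then homDim K Δ (i + 1).toNat else 0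

/-- all facets (maximal faces) of `Δ` have the same cardinality -/
def IsPure (Δ : Finset (Finset ℕ)) : Prop :=
  ∀ F ∈ Δ, (∀ G ∈ Δ, F ⊆ G → F = G) → F.card = Δ.sup Finset.card

/-- `Δ` is Cohen–Macaulay (over `K`): for every face `F ∈ Δ` (including `∅`),
`β_i(lk_Δ(F)) = 0` for all `i ≠ dim Δ - |F|`. -/
def IsCohenMacaulay (Δ : Finset (Finset ℕ)) : Prop :=
  ∀ F ∈ Δ, ∀ i : ℤ, i ≠ dimZ Δ - F.card → betti K (link Δ F) i = 0

/-- `Δ` is Buchsbaum (over `K`): `Δ` is pure and the link of every vertex is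
Cohen–Macaulay. -/
def IsBuchsbaum (Δ : Finset (Finset ℕ)) : Prop :=
  IsPure Δ ∧ ∀ v : ℕ, ({v} : Finset ℕ) ∈ Δ → IsCohenMacaulay K (link Δ {v})

/-- `Δ` is connected: any two vertices are joined by a path of edges of `Δ` -/
def IsConnectedComplex (Δ : Finset (Finset ℕ)) : Prop :=
  ∀ u v : ℕ, ({u} : Finset ℕ) ∈ Δ → ({v} : Finset ℕ) ∈ Δ →
    Relation.ReflTransGen (fun a b : ℕ => a ≠ b ∧ ({a, b} : Finset ℕ) ∈ Δ) u v

/-- `Δ` is link-acyclic: `β_i(lk_Δ(v)) = 0` for every vertex `v` of `Δ` and every `i` -/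
def IsLinkAcyclic (Δ : Finset (Finset ℕ)) : Prop :=
  ∀ v : ℕ, ({v} : Finset ℕ) ∈ Δ → ∀ i : ℤ, betti K (link Δ {v}) i = 0

/-- `Δ` is `2`-dimensional with `h`-vector `(a, b, c, e)` -/
def hVector3 (Δ : Finset (Finset ℕ)) (a b c e : ℤ) : Prop :=
  hVec 3 Δ 0 = a ∧ hVec 3 Δ 1 = b ∧ hVec 3 Δ 2 = c ∧ hVec 3 Δ 3 = e

/-- `macaulay2 a = a^⟨2⟩`: if `a = C(b,2) + r` is the (greedy) `2`-nd Macaulay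
representation (`b` maximal with `C(b,2) ≤ a`, `0 ≤ r < b`, `r = C(r,1)`), then
`a^⟨2⟩ = C(b+1,3) + C(r+1,2)`, and `0^⟨2⟩ = 0`. -/
def macaulay2 (a : ℕ) : ℕ :=
  if a = 0 then 0
  else
    (Nat.findGreatest (fun t => t.choose 2 ≤ a) (a + 2) + 1).choose 3
      + (a - (Nat.findGreatest (fun t => t.choose 2 ≤ a) (a + 2)).choose 2 + 1).choose 2

/-- `modRep n i = ī`, the unique element of `[n] = {1,…,n}` congruent to `i` mod `n` -/
def modRep (n : ℕ) (i : ℤ) : ℕ := ((i - 1) % (n : ℤ)).toNat + 1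


end

lemma gspec {a : ℕ} (ha : 1 ≤ a) :
    ∃ b, Nat.findGreatest (fun t => t.choose 2 ≤ a) (a + 2) = b ∧
      2 ≤ b ∧ b ≤ a + 1 ∧ b.choose 2 ≤ a ∧ a < (b + 1).choose 2 := by
  have hP2 : Nat.choose 2 2 ≤ a := by simpa using ha
  have hA : 2 ≤ Nat.findGreatest (fun t => t.choose 2 ≤ a) (a + 2) :=
    Nat.le_findGreatest (P := fun t => t.choose 2 ≤ a) (by omega) hP2
  have hB : (Nat.findGreatest (fun t => t.choose 2 ≤ a) (a + 2)).choose 2 ≤ a :=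
    Nat.findGreatest_spec (P := fun t => t.choose 2 ≤ a) (m := 2) (by omega) hP2
  have hle : Nat.findGreatest (fun t => t.choose 2 ≤ a) (a + 2) ≤ a + 2 :=
    Nat.findGreatest_le _
  set b := Nat.findGreatest (fun t => t.choose 2 ≤ a) (a + 2) with hb
  have hFle : b ≤ a + 1 := by
    by_contra hc
    have hFa : b = a + 2 := by omega
    have h2 : (a + 2).choose 2 = (a+1).choose 2 + (a+1) := by
      rw [show a + 2 = (a+1)+1 by omega]
      rw [Nat.choose_succ_succ]; simp [Nat.choose_one_right]; ring
    rw [hFa] at hB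
    omega
  refine ⟨b, rfl, hA, hFle, hB, ?_⟩
  by_contra hc
  have h3 : (fun t => t.choose 2 ≤ a) (b + 1) := by simp only []; omega
  have := Nat.le_findGreatest (P := fun t => t.choose 2 ≤ a) (m := b + 1)
    (n := a + 2) (by omega) h3
  rw [← hb] at this
  omega

lemma mac_succ_mono (a : ℕ) : macaulay2 a ≤ macaulay2 (a + 1) := by
  rcases Nat.eq_zero_or_pos a with rfl | ha
  · simp [macaulay2]
  obtain ⟨b, hb, hb2, hba, hbl, hbu⟩ := gspec ha
  obtain ⟨b', hb', hb2', hba', hbl', hbu'⟩ := gspec (show 1 ≤ a + 1 by omega)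
  have hcs : ∀ n : ℕ, (n+1).choose 2 = n.choose 2 + n := by
    intro n; rw [Nat.choose_succ_succ]; simp [Nat.choose_one_right]; ring
  have hle : b ≤ b' := by
    rw [← hb']
    exact Nat.le_findGreatest (P := fun t => t.choose 2 ≤ a + 1) (n := a + 1 + 2)
      (by omega) (show b.choose 2 ≤ a + 1 by omega)
  have hge : b' ≤ b + 1 := by
    by_contra hc
    have h0 : (b+1+1).choose 2 ≤ b'.choose 2 := Nat.choose_le_choose 2 (by omega)
    have h1 := hcs b
    have h2 := hcs (b+1)
    omega
  rw [macaulay2, macaulay2, if_neg (by omega), if_neg (by omega), hb, hb']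
  rcases (show b' = b ∨ b' = b + 1 by omega) with he | he
  · rw [he]
    have : (a - b.choose 2 + 1).choose 2 ≤ (a + 1 - b.choose 2 + 1).choose 2 :=
      Nat.choose_le_choose 2 (by omega)
    omega
  · rw [he]
    have h1 := hcs b
    have hav : a + 1 = (b+1).choose 2 := by rw [he] at hbl'; omega
    have h2 : a + 1 - (b+1).choose 2 + 1 = 1 := by omega
    have h3 : a - b.choose 2 + 1 = b := by omega
    rw [h2, h3]
    have h4 : (b+1+1).choose 3 = (b+1).choose 2 + (b+1).choose 3 := Nat.choose_succ_succ _ _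
    have h5 : b.choose 2 ≤ (b+1).choose 2 := Nat.choose_le_choose 2 (by omega)
    have h6 : Nat.choose 1 2 = 0 := by decide
    omega

lemma mac_mono : Monotone macaulay2 := monotone_nat_of_le_succ mac_succ_mono

/-- If `(1,h1,h2,h3)` satisfies the conditions of Theorem 1.1 and
`h2 + 3 ≤ C((h1-3)+1, 2)`, then `(1, h1-3, h2+3, h3-1)` also satisfies them. -/
theorem stmt2 (h1 h2 h3 : ℤ)
    (hc : 0 ≤ h1 ∧ 0 ≤ h2 ∧ h2 ≤ (((h1 + 1).toNat.choose 2 : ℕ) : ℤ) ∧ -h2 ≤ 3 * h3 ∧ h3 ≤ ((macaulay2 h2.toNat : ℕ) : ℤ))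
    (h : h2 + 3 ≤ (((h1 - 3 + 1).toNat.choose 2 : ℕ) : ℤ)) :
    0 ≤ (h1 - 3) ∧ 0 ≤ (h2 + 3) ∧ (h2 + 3) ≤ ((((h1 - 3) + 1).toNat.choose 2 : ℕ) : ℤ) ∧ -(h2 + 3) ≤ 3 * (h3 - 1) ∧ (h3 - 1) ≤ ((macaulay2 (h2 + 3).toNat : ℕ) : ℤ) := by
  obtain ⟨hh1, hh2, hub, hlo, hhi⟩ := hc
  have hch : (3 : ℤ) ≤ (((h1 - 3 + 1).toNat.choose 2 : ℕ) : ℤ) := by omega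
  have hh13 : 0 ≤ h1 - 3 := by
    by_contra hcon
    have : (h1 - 3 + 1).toNat ≤ 1 := by omega
    interval_cases hn : (h1 - 3 + 1).toNat <;> simp_all
  have ht : (h2 + 3).toNat = h2.toNat + 3 := by omega
  have hm : macaulay2 h2.toNat ≤ macaulay2 (h2 + 3).toNat := by
    rw [ht]; exact mac_mono (by omega)
  exact ⟨hh13, by omega, h, by omega, by omega⟩
end

section
/- Let Δ be a 2-dimensional Buchsbaum simplicial complex on [n] and let Δ_1,…,Δ_t be 2-dimensional simplicial complexes whose vertex sets are contained in [n]. If Δ ∪ Δ_k is Buchsbaum for every k = 1,2,…,t, then Δ ∪ Δ_1 ∪ ⋯ ∪ Δ_j is Buchsbaum for every j = 1,2,…,t. -/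
open Finset

/-!
For a pure complex of dimension 2 the link of a vertex is a pure graph, and for a pure graph
Cohen–Macaulayness means connectedness: `β₋₁` vanishes because every vertex lies on an edge,
and `β₀` is the number of components minus one. So a 2-dimensional complex is Buchsbaum iff it
is pure with connected vertex links. Now `Δ ∪ Δ₁ ∪ ⋯ ∪ Δⱼ` is the union of the complexes
`Δ ∪ Δₖ`, so the link of a vertex `v` in it is the union of its links in the `Δ ∪ Δₖ`. These are
connected and, by purity of `Δ`, all contain a neighbour of `v` in `Δ`, so their union is
connected.
-/

noncomputable section

variable (K : Type) [Field K] {Γ : Finset (Finset ℕ)}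

lemma bdry_single (F : Finset ℕ) :
    bdry K (Finsupp.single F 1) =
      ∑ v ∈ F, (-1 : K) ^ (F.filter fun u => u < v).card • Finsupp.single (F.erase v) 1 := by
  simp [bdry]

lemma bdry_vertex (v : ℕ) :
    bdry K (Finsupp.single {v} 1) = Finsupp.single ∅ 1 := by
  simp [bdry_single, filter_singleton]

lemma bdry_pair {a b : ℕ} (h : a < b) :
    bdry K (Finsupp.single {a, b} 1) = Finsupp.single {b} 1 - Finsupp.single {a} 1 := by
  have hfa : ({a, b} : Finset ℕ).filter (· < a) = ∅ := by
    ext x; simp only [mem_filter, mem_insert, mem_singleton, notMem_empty, iff_false]; omega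
  have hfb : ({a, b} : Finset ℕ).filter (· < b) = {a} := by
    ext x; simp only [mem_filter, mem_insert, mem_singleton]; constructor <;> omega
  rw [bdry_single, sum_pair h.ne, hfa, hfb, erase_insert (by simp [h.ne]), pair_comm,
    erase_insert (by simp [h.ne'])]
  simp [sub_eq_add_neg, add_comm]

lemma bdry_pair_eq_or {a b : ℕ} (h : a ≠ b) :
    bdry K (Finsupp.single {a, b} 1) = Finsupp.single {b} 1 - Finsupp.single {a} 1 ∨
      bdry K (Finsupp.single {a, b} 1) = Finsupp.single {a} 1 - Finsupp.single {b} 1 := by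
  rcases h.lt_or_gt with h | h
  · exact .inl (bdry_pair K h)
  · exact .inr (pair_comm a b ▸ bdry_pair K h)

lemma single_mem_chains {F : Finset ℕ} {m : ℕ} (hF : F ∈ Γ) (hm : F.card = m) :
    Finsupp.single F 1 ∈ chains K Γ m :=
  Submodule.subset_span ⟨F, by simp [facesOf, hF, hm], rfl⟩

instance (m : ℕ) : FiniteDimensional K (chains K Γ m) :=
  FiniteDimensional.span_of_finite K ((facesOf Γ m).finite_toSet.image _)

lemma chains_eq_bot {m : ℕ} (h : facesOf Γ m = ∅) : chains K Γ m = ⊥ := by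
  simp [chains, h]

lemma chains_zero_le : chains K Γ 0 ≤ K ∙ Finsupp.single ∅ 1 := by
  refine Submodule.span_mono ?_
  rintro _ ⟨F, hF, rfl⟩
  simp_all [facesOf]

def cycles (Γ : Finset (Finset ℕ)) (m : ℕ) : Submodule K (Finset ℕ →₀ K) :=
  chains K Γ m ⊓ LinearMap.ker (bdry K)

def boundaries (Γ : Finset (Finset ℕ)) (m : ℕ) : Submodule K (Finset ℕ →₀ K) :=
  (chains K Γ (m + 1)).map (bdry K)

instance (m : ℕ) : FiniteDimensional K (cycles K Γ m) :=
  Submodule.finiteDimensional_of_le inf_le_left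

lemma homDim_eq_finrank_sub (m : ℕ) :
    homDim K Γ m = Module.finrank K (cycles K Γ m) - Module.finrank K (boundaries K Γ m) :=
  rfl

lemma homDim_eq_zero_of_le {m : ℕ} (h : cycles K Γ m ≤ boundaries K Γ m) : homDim K Γ m = 0 :=
  Nat.sub_eq_zero_of_le (Submodule.finrank_mono h)

lemma homDim_eq_zero_of_facesOf_eq_empty {m : ℕ} (h : facesOf Γ m = ∅) : homDim K Γ m = 0 :=
  homDim_eq_zero_of_le K (by simp [cycles, chains_eq_bot K h])

lemma homDim_eq_zero_of_card_lt {m : ℕ} (h : ∀ G ∈ Γ, G.card < m) : homDim K Γ m = 0 :=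
  homDim_eq_zero_of_facesOf_eq_empty K <| filter_eq_empty_iff.2 fun G hG => (h G hG).ne

lemma homDim_zero_eq_zero {v : ℕ} (hv : {v} ∈ Γ) : homDim K Γ 0 = 0 := by
  refine homDim_eq_zero_of_le K (inf_le_left.trans ((chains_zero_le K).trans ?_))
  exact (Submodule.span_singleton_le_iff_mem _ _).2
    ⟨_, single_mem_chains K hv rfl, bdry_vertex K v⟩

lemma betti_natCast_sub_one (m : ℕ) : betti K Γ ((m : ℤ) - 1) = homDim K Γ m := by
  simp [betti]

-- `IsConnectedComplex Γ` unfolds to reachability along `adj Γ`.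
def adj (Γ : Finset (Finset ℕ)) (a b : ℕ) : Prop := a ≠ b ∧ ({a, b} : Finset ℕ) ∈ Γ

instance : Std.Symm (adj Γ) where
  symm _ _ h := ⟨h.1.symm, by rw [pair_comm]; exact h.2⟩

lemma boundaries_one_le_cycles (hdc : ∀ F ∈ Γ, ∀ G ⊆ F, G ∈ Γ) :
    boundaries K Γ 1 ≤ cycles K Γ 1 := by
  rw [boundaries, chains, Submodule.map_span, Submodule.span_le]
  rintro _ ⟨_, ⟨F, hF, rfl⟩, rfl⟩
  rw [mem_coe, facesOf, mem_filter] at hF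
  obtain ⟨a, b, hab, rfl⟩ := card_eq_two.1 hF.2
  have ha := single_mem_chains K (hdc _ hF.1 {a} (by simp)) rfl
  have hb := single_mem_chains K (hdc _ hF.1 {b} (by simp)) rfl
  rcases bdry_pair_eq_or K hab with h | h <;> rw [SetLike.mem_coe, h]
  · exact ⟨Submodule.sub_mem _ hb ha, by simp [bdry_vertex]⟩
  · exact ⟨Submodule.sub_mem _ ha hb, by simp [bdry_vertex]⟩

lemma boundaries_one_le_ker (ψ : (Finset ℕ →₀ K) →ₗ[K] K)
    (hψ : ∀ a b, adj Γ a b → ψ (Finsupp.single {a} 1) = ψ (Finsupp.single {b} 1)) :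
    boundaries K Γ 1 ≤ LinearMap.ker ψ := by
  rw [boundaries, chains, Submodule.map_span, Submodule.span_le]
  rintro _ ⟨_, ⟨F, hF, rfl⟩, rfl⟩
  rw [mem_coe, facesOf, mem_filter] at hF
  obtain ⟨a, b, hab, rfl⟩ := card_eq_two.1 hF.2
  rcases bdry_pair_eq_or K hab with h | h <;> simp [h, hψ a b ⟨hab, hF.1⟩]

lemma sub_mem_boundaries_of_reflTransGen {a b : ℕ} (h : Relation.ReflTransGen (adj Γ) a b) :
    Finsupp.single {a} 1 - Finsupp.single {b} 1 ∈ boundaries K Γ 1 := by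
  induction h with
  | refl => simp
  | @tail b c _ hbc ih =>
    have hedge : Finsupp.single {b} 1 - Finsupp.single {c} 1 ∈ boundaries K Γ 1 := by
      have hmem := single_mem_chains K hbc.2 (card_pair hbc.1)
      rcases bdry_pair_eq_or K hbc.1 with h | h
      · have := Submodule.neg_mem _ (Submodule.mem_map_of_mem (f := bdry K) hmem)
        rwa [h, neg_sub] at this
      · exact h ▸ Submodule.mem_map_of_mem hmem
    simpa using Submodule.add_mem _ ih hedge

-- `c` is the coefficient sum of `x`: along a path, every vertex is homologous to `v₀`.
lemma exists_sub_smul_mem_boundaries (hconn : IsConnectedComplex Γ) {v₀ : ℕ}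
    (hv₀ : {v₀} ∈ Γ) {x : Finset ℕ →₀ K} (hx : x ∈ chains K Γ 1) :
    ∃ c : K, bdry K x = c • Finsupp.single ∅ 1 ∧
      x - c • Finsupp.single {v₀} 1 ∈ boundaries K Γ 1 := by
  induction hx using Submodule.span_induction with
  | mem y hy =>
    obtain ⟨G, hG, rfl⟩ := hy
    rw [mem_coe, facesOf, mem_filter] at hG
    obtain ⟨u, rfl⟩ := card_eq_one.1 hG.2
    refine ⟨1, by simp [bdry_vertex], ?_⟩
    simpa using sub_mem_boundaries_of_reflTransGen K (hconn u v₀ hG.1 hv₀)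
  | zero => exact ⟨0, by simp, by simp⟩
  | add y z _ _ hy hz =>
    obtain ⟨c, hc, hyc⟩ := hy
    obtain ⟨d, hd, hzd⟩ := hz
    refine ⟨c + d, by simp [hc, hd, add_smul], ?_⟩
    convert Submodule.add_mem _ hyc hzd using 1
    module
  | smul a y _ hy =>
    obtain ⟨c, hc, hyc⟩ := hy
    refine ⟨a * c, by simp [hc, mul_smul], ?_⟩
    convert Submodule.smul_mem _ a hyc using 1
    module

lemma IsConnectedComplex.homDim_one_eq_zero (hconn : IsConnectedComplex Γ) :
    homDim K Γ 1 = 0 := by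
  rcases (facesOf Γ 1).eq_empty_or_nonempty with h | ⟨F, hF⟩
  · exact homDim_eq_zero_of_facesOf_eq_empty K h
  rw [facesOf, mem_filter] at hF
  obtain ⟨v₀, rfl⟩ := card_eq_one.1 hF.2
  refine homDim_eq_zero_of_le K fun x ⟨hx, hx₀⟩ => ?_
  obtain ⟨c, hc, hxc⟩ := exists_sub_smul_mem_boundaries K hconn hF.1 hx
  rw [LinearMap.mem_ker.1 hx₀] at hc
  have hc₀ : c = 0 :=
    (smul_eq_zero.1 hc.symm).resolve_right (Finsupp.single_ne_zero.2 one_ne_zero)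
  simpa [hc₀] using hxc

lemma isConnectedComplex_of_homDim_one_eq_zero (hdc : ∀ F ∈ Γ, ∀ G ⊆ F, G ∈ Γ)
    (h : homDim K Γ 1 = 0) : IsConnectedComplex Γ := by
  classical
  intro u w hu hw
  change Relation.ReflTransGen (adj Γ) u w
  by_contra huw
  -- the indicator of the component of `u` is a cocycle separating `u` from `w`
  let ψ := Finsupp.linearCombination K
    (Set.indicator {F : Finset ℕ | ∃ a ∈ F, Relation.ReflTransGen (adj Γ) u a} (1 : Finset ℕ → K))
  have hψ : ∀ a, ψ (Finsupp.single {a} 1) =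
      if Relation.ReflTransGen (adj Γ) u a then 1 else 0 := by
    intro a
    simp [ψ, Set.indicator_apply]
  have hker : boundaries K Γ 1 ≤ LinearMap.ker ψ := by
    refine boundaries_one_le_ker K ψ fun a b hab => ?_
    have : Relation.ReflTransGen (adj Γ) u a ↔ Relation.ReflTransGen (adj Γ) u b :=
      ⟨fun h => h.tail hab, fun h => h.tail (symm hab)⟩
    simp [hψ, this]
  have hlt : boundaries K Γ 1 < cycles K Γ 1 := by
    refine SetLike.lt_iff_le_and_exists.2 ⟨boundaries_one_le_cycles K hdc,
      Finsupp.single {u} 1 - Finsupp.single {w} 1, ?_, fun hmem => ?_⟩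
    · exact ⟨Submodule.sub_mem _ (single_mem_chains K hu rfl) (single_mem_chains K hw rfl),
        by simp [bdry_vertex]⟩
    · have := LinearMap.mem_ker.1 (hker hmem)
      simp [hψ, huw, Relation.ReflTransGen.refl] at this
  have := Submodule.finrank_lt_finrank_of_lt hlt
  rw [homDim_eq_finrank_sub] at h
  omega

section Link

variable {F G : Finset ℕ}

lemma mem_link : G ∈ link Γ F ↔ G ∈ Γ ∧ Disjoint G F ∧ G ∪ F ∈ Γ :=
  mem_filter

lemma link_empty : link Γ ∅ = Γ := by
  ext G
  simp +contextual [mem_link]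

lemma link_mono {Γ' : Finset (Finset ℕ)} (h : Γ ⊆ Γ') : link Γ F ⊆ link Γ' F :=
  fun _ hG => mem_link.2 ⟨h (mem_link.1 hG).1, (mem_link.1 hG).2.1, h (mem_link.1 hG).2.2⟩

lemma link_downward_closed (hdc : ∀ F ∈ Γ, ∀ G ⊆ F, G ∈ Γ) :
    ∀ G ∈ link Γ F, ∀ G' ⊆ G, G' ∈ link Γ F := by
  intro G hG G' hG'
  obtain ⟨hGΓ, hGF, hGFΓ⟩ := mem_link.1 hG
  exact mem_link.2 ⟨hdc _ hGΓ _ hG', hGF.mono_left hG', hdc _ hGFΓ _ (union_subset_union_left hG')⟩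

lemma card_add_card_le_of_mem_link (hG : G ∈ link Γ F) : G.card + F.card ≤ Γ.sup card := by
  rw [← card_union_of_disjoint (mem_link.1 hG).2.1]
  exact le_sup (mem_link.1 hG).2.2

lemma sdiff_mem_link (hdc : ∀ F ∈ Γ, ∀ G ⊆ F, G ∈ Γ) {H : Finset ℕ} (hH : H ∈ Γ) (hFH : F ⊆ H) :
    H \ F ∈ link Γ F :=
  mem_link.2 ⟨hdc _ hH _ sdiff_subset, sdiff_disjoint, by rwa [sdiff_union_of_subset hFH]⟩

lemma singleton_mem_link_of_insert_mem (hdc : ∀ F ∈ Γ, ∀ G ⊆ F, G ∈ Γ) {w : ℕ} (hw : w ∉ F)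
    (h : insert w F ∈ Γ) : {w} ∈ link Γ F :=
  mem_link.2 ⟨hdc _ h _ (by simp), disjoint_singleton_left.2 hw, by rwa [← insert_eq]⟩

lemma link_biUnion {ι : Type*} {s : Finset ι} {Λ : ι → Finset (Finset ℕ)}
    (hdc : ∀ k ∈ s, ∀ F ∈ Λ k, ∀ G ⊆ F, G ∈ Λ k) :
    link (s.biUnion Λ) F = s.biUnion fun k => link (Λ k) F := by
  ext G
  simp only [mem_biUnion, mem_link]
  constructor
  · rintro ⟨-, hGF, k, hk, hGFk⟩
    exact ⟨k, hk, hdc k hk _ hGFk _ subset_union_left, hGF, hGFk⟩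
  · rintro ⟨k, hk, hGk, hGF, hGFk⟩
    exact ⟨⟨k, hk, hGk⟩, hGF, k, hk, hGFk⟩

end Link

section Pure

variable {F : Finset ℕ}

lemma IsPure.exists_superset_card_eq (hpure : IsPure Γ) (hF : F ∈ Γ) :
    ∃ G ∈ Γ, F ⊆ G ∧ G.card = Γ.sup card := by
  obtain ⟨G, hG, hGmax⟩ :=
    exists_max_image (Γ.filter (F ⊆ ·)) card ⟨F, mem_filter.2 ⟨hF, subset_rfl⟩⟩
  rw [mem_filter] at hG
  refine ⟨G, hG.1, hG.2, hpure G hG.1 fun H hH hGH => ?_⟩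
  exact eq_of_subset_of_card_le hGH (hGmax H (mem_filter.2 ⟨hH, hG.2.trans hGH⟩))

lemma IsPure.exists_insert_mem (hdc : ∀ F ∈ Γ, ∀ G ⊆ F, G ∈ Γ) (hpure : IsPure Γ) (hF : F ∈ Γ)
    (hcard : F.card < Γ.sup card) : ∃ w ∉ F, insert w F ∈ Γ := by
  obtain ⟨G, hG, hFG, hGcard⟩ := hpure.exists_superset_card_eq hF
  obtain ⟨w, hwG, hwF⟩ := exists_of_ssubset (ssubset_of_subset_of_ne hFG (by rintro rfl; omega))
  exact ⟨w, hwF, hdc G hG _ (insert_subset hwG hFG)⟩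

lemma IsPure.sup_card_link (hdc : ∀ F ∈ Γ, ∀ G ⊆ F, G ∈ Γ) (hpure : IsPure Γ) (hF : F ∈ Γ) :
    (link Γ F).sup card = Γ.sup card - F.card := by
  obtain ⟨G, hG, hFG, hGcard⟩ := hpure.exists_superset_card_eq hF
  refine le_antisymm (Finset.sup_le fun H hH => ?_) ?_
  · have := card_add_card_le_of_mem_link hH
    omega
  · calc Γ.sup card - F.card = (G \ F).card := by rw [card_sdiff_of_subset hFG, hGcard]
      _ ≤ (link Γ F).sup card := le_sup (sdiff_mem_link hdc hG hFG)

-- A face `G` maximal in the link of `F` gives the facet `G ∪ F` of `Γ`.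
lemma IsPure.link (hdc : ∀ F ∈ Γ, ∀ G ⊆ F, G ∈ Γ) (hpure : IsPure Γ) : IsPure (link Γ F) := by
  intro G hG hGmax
  obtain ⟨-, hGF, hGFΓ⟩ := mem_link.1 hG
  have hfacet : (G ∪ F).card = Γ.sup card := by
    refine hpure _ hGFΓ fun H hH hGFH => ?_
    have hFH : F ⊆ H := subset_union_right.trans hGFH
    have := hGmax _ (sdiff_mem_link hdc hH hFH) (subset_sdiff.2 ⟨subset_union_left.trans hGFH, hGF⟩)
    rw [this, sdiff_union_of_subset hFH]
  rw [hpure.sup_card_link hdc (hdc _ hGFΓ _ subset_union_right), ← hfacet,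
    card_union_of_disjoint hGF]
  omega

end Pure

lemma isCohenMacaulay_iff_isConnectedComplex (hdc : ∀ F ∈ Γ, ∀ G ⊆ F, G ∈ Γ)
    (hpure : IsPure Γ) (hsup : Γ.sup card = 2) :
    IsCohenMacaulay K Γ ↔ IsConnectedComplex Γ := by
  have hdim : dimZ Γ = 1 := by simp [dimZ, hsup]
  have hempty : ∅ ∈ Γ := by
    obtain ⟨G, hG, -⟩ := exists_mem_eq_sup Γ
      (nonempty_iff_ne_empty.2 fun h => by simp [h] at hsup) card
    exact hdc G hG ∅ (empty_subset G)
  constructor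
  · intro hcm
    have := hcm ∅ hempty ((1 : ℕ) - 1) (by simp [hdim])
    rw [link_empty, betti_natCast_sub_one] at this
    exact isConnectedComplex_of_homDim_one_eq_zero K hdc this
  · intro hconn F hF i hi
    obtain hi | ⟨m, rfl⟩ : i < -1 ∨ ∃ m : ℕ, i = (m : ℤ) - 1 :=
      (lt_or_ge i (-1)).imp_right fun h => ⟨(i + 1).toNat, by omega⟩
    · simp [betti, show ¬ 0 ≤ i + 1 by omega]
    rw [hdim] at hi
    rw [betti_natCast_sub_one]
    rcases lt_or_ge (2 : ℤ) (m + F.card) with hlarge | hsmall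
    · refine homDim_eq_zero_of_card_lt K fun G hG => ?_
      have := card_add_card_le_of_mem_link hG
      omega
    obtain ⟨rfl, hFcard⟩ | ⟨rfl, hFcard⟩ : m = 0 ∧ F.card < 2 ∨ m = 1 ∧ F.card = 0 := by omega
    · obtain ⟨w, hwF, hw⟩ := hpure.exists_insert_mem hdc hF (hsup ▸ hFcard)
      exact homDim_zero_eq_zero K (singleton_mem_link_of_insert_mem hdc hwF hw)
    · rw [card_eq_zero.1 hFcard, link_empty]
      exact hconn.homDim_one_eq_zero K

lemma isBuchsbaum_iff (hdc : ∀ F ∈ Γ, ∀ G ⊆ F, G ∈ Γ) (hsup : Γ.sup card = 3) :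
    IsBuchsbaum K Γ ↔ IsPure Γ ∧ ∀ v : ℕ, {v} ∈ Γ → IsConnectedComplex (link Γ {v}) := by
  refine and_congr_right fun hpure => forall₂_congr fun v hv => ?_
  exact isCohenMacaulay_iff_isConnectedComplex K (link_downward_closed hdc) (hpure.link hdc)
    (by rw [hpure.sup_card_link hdc hv, hsup, card_singleton])

section BiUnion

variable {ι : Type*} {s : Finset ι} {Λ : ι → Finset (Finset ℕ)}

lemma isConnectedComplex_biUnion {a : ℕ} (hconn : ∀ k ∈ s, IsConnectedComplex (Λ k))
    (ha : ∀ k ∈ s, {a} ∈ Λ k) : IsConnectedComplex (s.biUnion Λ) := by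
  suffices h : ∀ u, {u} ∈ s.biUnion Λ → Relation.ReflTransGen (adj (s.biUnion Λ)) u a from
    fun u w hu hw => (h u hu).trans (symm (h w hw))
  intro u hu
  obtain ⟨k, hk, huk⟩ := mem_biUnion.1 hu
  have hadj : adj (Λ k) ≤ adj (s.biUnion Λ) := fun x y hxy =>
    ⟨hxy.1, subset_biUnion_of_mem Λ hk hxy.2⟩
  exact Relation.ReflTransGen.mono hadj u a (hconn k hk u a huk (ha k hk))

lemma sup_card_biUnion (hs : s.Nonempty) {d : ℕ} (hsup : ∀ k ∈ s, (Λ k).sup card = d) :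
    (s.biUnion Λ).sup card = d := by
  rw [sup_biUnion, sup_congr rfl hsup, sup_const hs]

lemma isPure_biUnion (hs : s.Nonempty) {d : ℕ} (hpure : ∀ k ∈ s, IsPure (Λ k))
    (hsup : ∀ k ∈ s, (Λ k).sup card = d) : IsPure (s.biUnion Λ) := by
  intro F hF hFmax
  obtain ⟨k, hk, hFk⟩ := mem_biUnion.1 hF
  rw [sup_card_biUnion hs hsup, ← hsup k hk]
  exact hpure k hk F hFk fun G hG => hFmax G (mem_biUnion.2 ⟨k, hk, hG⟩)

-- Every vertex link of the union is the union of the corresponding links, which are connected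
-- and share the vertex `a`.
theorem isBuchsbaum_biUnion (hs : s.Nonempty) (hdc : ∀ k ∈ s, ∀ F ∈ Λ k, ∀ G ⊆ F, G ∈ Λ k)
    (hsup : ∀ k ∈ s, (Λ k).sup card = 3) (hB : ∀ k ∈ s, IsBuchsbaum K (Λ k))
    (hcommon : ∀ v : ℕ, {v} ∈ s.biUnion Λ → ∃ a, ∀ k ∈ s, {a} ∈ link (Λ k) {v}) :
    IsBuchsbaum K (s.biUnion Λ) := by
  have hdcU : ∀ F ∈ s.biUnion Λ, ∀ G ⊆ F, G ∈ s.biUnion Λ := by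
    intro F hF G hGF
    obtain ⟨k, hk, hFk⟩ := mem_biUnion.1 hF
    exact mem_biUnion.2 ⟨k, hk, hdc k hk F hFk G hGF⟩
  rw [isBuchsbaum_iff K hdcU (sup_card_biUnion hs hsup)]
  refine ⟨isPure_biUnion hs (fun k hk => (hB k hk).1) hsup, fun v hv => ?_⟩
  obtain ⟨a, ha⟩ := hcommon v hv
  rw [link_biUnion hdc]
  refine isConnectedComplex_biUnion (fun k hk => ?_) ha
  have hvk : {v} ∈ Λ k := hdc k hk _ (mem_link.1 (ha k hk)).2.2 _ subset_union_right
  exact ((isBuchsbaum_iff K (hdc k hk) (hsup k hk)).1 (hB k hk)).2 v hvk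

end BiUnion

lemma sup_card_eq_three_of_dimZ_eq_two {Γ : Finset (Finset ℕ)} (h : dimZ Γ = 2) :
    Γ.sup card = 3 := by
  rw [dimZ] at h
  omega

end

/-- **Lemma 2.4(i).** If `Δ` is a `2`-dimensional Buchsbaum complex on `[n]` and
`Δ_1,…,Δ_t` are `2`-dimensional complexes with vertex sets in `[n]` such that each
`Δ ∪ Δ_k` is Buchsbaum, then `Δ ∪ Δ_1 ∪ ⋯ ∪ Δ_j` is Buchsbaum for `j = 1,…,t`. -/
theorem stmt6 (K : Type) [Field K] (n t : ℕ) (Δ : Finset (Finset ℕ))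
    (Δs : ℕ → Finset (Finset ℕ))
    (hΔ : IsComplexOn n Δ) (hdim : dimZ Δ = 2) (hB : IsBuchsbaum K Δ)
    (hk : ∀ k ∈ Finset.Icc 1 t, IsComplexIn n (Δs k) ∧ dimZ (Δs k) = 2)
    (hBk : ∀ k ∈ Finset.Icc 1 t, IsBuchsbaum K (Δ ∪ Δs k)) :
    ∀ j ∈ Finset.Icc 1 t, IsBuchsbaum K (Δ ∪ (Finset.Icc 1 j).biUnion Δs) := by
  intro j hj
  have hs : (Icc 1 j).Nonempty := nonempty_Icc.2 (mem_Icc.1 hj).1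
  have hkt : ∀ k ∈ Icc 1 j, k ∈ Icc 1 t := fun k hkj => by
    simp only [mem_Icc] at hkj hj ⊢; omega
  have hsupΔ := sup_card_eq_three_of_dimZ_eq_two hdim
  have hunion : Δ ∪ (Icc 1 j).biUnion Δs = (Icc 1 j).biUnion fun k => Δ ∪ Δs k := by
    ext F; simp only [mem_union, mem_biUnion]; grind
  rw [hunion]
  refine isBuchsbaum_biUnion K hs (fun k hkj F hF G hGF => ?_) (fun k hkj => ?_)
    (fun k hkj => hBk k (hkt k hkj)) fun v hv => ?_
  · rcases mem_union.1 hF with hF | hF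
    · exact mem_union_left _ (hΔ.1 F hF G hGF)
    · exact mem_union_right _ ((hk k (hkt k hkj)).1.1 F hF G hGF)
  · rw [sup_union, hsupΔ, sup_card_eq_three_of_dimZ_eq_two (hk k (hkt k hkj)).2, max_self]
  -- every vertex lies in `[n]`, hence in `Δ`, where purity supplies an edge through it
  have hvΔ : {v} ∈ Δ := by
    obtain ⟨k, hkj, hvk⟩ := mem_biUnion.1 hv
    rcases mem_union.1 hvk with hvk | hvk
    · exact hvk
    · exact hΔ.2.2 v ((hk k (hkt k hkj)).1.2 _ hvk v (mem_singleton_self v))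
  obtain ⟨a, hav, ha⟩ := hB.1.exists_insert_mem hΔ.1 hvΔ (by rw [hsupΔ, card_singleton]; omega)
  exact ⟨a, fun k _ => link_mono subset_union_left (singleton_mem_link_of_insert_mem hΔ.1 hav ha)⟩
end
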